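/- Let C be a category, let F and G be functors ⟨G,M⟩ → C, and let η: F → G be a natural transformation between their restrictions along the canonical inclusion M ↪ ⟨G,M⟩. Then η is a natural transformation of functors on ⟨G,M⟩ if and only if for all objects A, B of M with B ≅ X♮A for some object X of G, one has η_B ∘ F([X, id_B]) = G([X, id_B]) ∘ η_A. -/

import Mathlib

open CategoryTheory

universe v u v' u' w' w

/-- Data of a *strict* monoidal structure `(♮, 0)` on a groupoid `G`, braided via `braiding`,
together with a *strict* left action of `(G, ♮, 0)` on a groupoid `M` (a left-module
structure).  All object-level laws hold as equalities of objects, and the morphism-level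
compatibilities are recorded via `eqToHom` transports. -/
structure StrictModuleData (G : Type u) [Groupoid G] (M : Type u') [Groupoid M] where
  tObj : G → G → G
  unit : G
  tHom : ∀ {A A' B B' : G}, (A ⟶ A') → (B ⟶ B') → (tObj A B ⟶ tObj A' B')
  tHom_id : ∀ (A B : G), tHom (𝟙 A) (𝟙 B) = 𝟙 (tObj A B)
  tHom_comp : ∀ {A A' A'' B B' B'' : G} (a : A ⟶ A') (a' : A' ⟶ A'')
    (b : B ⟶ B') (b' : B' ⟶ B''), tHom (a ≫ a') (b ≫ b') = tHom a b ≫ tHom a' b'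
  unit_tObj : ∀ A, tObj unit A = A
  tObj_unit : ∀ A, tObj A unit = A
  tObj_assoc : ∀ A B C, tObj (tObj A B) C = tObj A (tObj B C)
  braiding : ∀ A B : G, tObj A B ⟶ tObj B A
  aObj : G → M → M
  aHom : ∀ {A A' : G} {X X' : M}, (A ⟶ A') → (X ⟶ X') → (aObj A X ⟶ aObj A' X')
  aHom_id : ∀ (A : G) (X : M), aHom (𝟙 A) (𝟙 X) = 𝟙 (aObj A X)
  aHom_comp : ∀ {A A' A'' : G} {X X' X'' : M} (a : A ⟶ A') (a' : A' ⟶ A'')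
    (f : X ⟶ X') (f' : X' ⟶ X''), aHom (a ≫ a') (f ≫ f') = aHom a f ≫ aHom a' f'
  unit_aObj : ∀ X, aObj unit X = X
  tObj_aObj : ∀ A B X, aObj (tObj A B) X = aObj A (aObj B X)
  unit_aHom : ∀ {X X' : M} (f : X ⟶ X'),
    aHom (𝟙 unit) f = eqToHom (unit_aObj X) ≫ f ≫ eqToHom (unit_aObj X').symm
  tHom_aHom : ∀ {A A' B B' : G} {X X' : M} (a : A ⟶ A') (b : B ⟶ B') (f : X ⟶ X'),
    aHom (tHom a b) f =
      eqToHom (tObj_aObj A B X) ≫ aHom a (aHom b f) ≫ eqToHom (tObj_aObj A' B' X').symm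

namespace StrictModuleData

variable {G : Type u} [Groupoid G] {M : Type u'} [Groupoid M] (D : StrictModuleData G M)

lemma aHom_left {A : G} {X X' X'' : M} (f : X ⟶ X') (f' : X' ⟶ X'') :
    D.aHom (𝟙 A) (f ≫ f') = D.aHom (𝟙 A) f ≫ D.aHom (𝟙 A) f' := by
  rw [← D.aHom_comp]; simp

lemma aHom_exch {A A' : G} {X X' : M} (a : A ⟶ A') (f : X ⟶ X') :
    D.aHom a (𝟙 X) ≫ D.aHom (𝟙 A') f = D.aHom (𝟙 A) f ≫ D.aHom a (𝟙 X') := by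
  rw [← D.aHom_comp, ← D.aHom_comp]; simp

lemma aHom_eqToHom {A A' : G} (h : A = A') (X : M) :
    D.aHom (eqToHom h) (𝟙 X) = eqToHom (by rw [h]) := by
  subst h; simp [D.aHom_id]

lemma aHom_id_eqToHom (A : G) {X X' : M} (h : X = X') :
    D.aHom (𝟙 A) (eqToHom h) = eqToHom (by rw [h]) := by
  subst h; simp [D.aHom_id]

end StrictModuleData

/-- The Quillen bracket construction `⟨G, M⟩`: a category with the same objects as `M` and
`Hom(X, Y) = colim_G Hom_M(− ♮ X, Y)`. -/
def QuillenBracket {G : Type u} [Groupoid G] {M : Type u'} [Groupoid M]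
    (_D : StrictModuleData G M) : Type u' := M

namespace QuillenBracket

variable {G : Type u} [Groupoid G] {M : Type u'} [Groupoid M] (D : StrictModuleData G M)

/-- Representatives of morphisms `X ⟶ Y` of `⟨G, M⟩`: pairs `(A, φ)` with `A` an object of
`G` and `φ : A ♮ X ⟶ Y` a morphism of `M`. -/
def Pre (X Y : M) : Type _ := Σ A : G, (D.aObj A X ⟶ Y)

/-- The colimit relation: `(A, φ) ∼ (A', φ ∘ (g ♮ id_X))` for `g : A' ⟶ A` in `G`. -/
def rel (X Y : M) (p q : Pre D X Y) : Prop :=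
  ∃ g : q.1 ⟶ p.1, q.2 = D.aHom g (𝟙 X) ≫ p.2

/-- Morphisms of `⟨G, M⟩`: equivalence classes `[A, φ]`. -/
def Hom' (X Y : M) : Type _ := Quot (rel D X Y)

/-- Composition of representatives: `[B, ψ] ∘ [A, φ] = [B ♮ A, ψ ∘ (id_B ♮ φ)]`. -/
def compPre {X Y Z : M} (p : Pre D X Y) (q : Pre D Y Z) : Hom' D X Z :=
  Quot.mk _ ⟨D.tObj q.1 p.1,
    eqToHom (D.tObj_aObj q.1 p.1 X) ≫ D.aHom (𝟙 q.1) p.2 ≫ q.2⟩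

instance instCategoryStructQuillenBracket : CategoryStruct (QuillenBracket D) where
  Hom X Y := Hom' D X Y
  id X := Quot.mk _ ⟨D.unit, eqToHom (D.unit_aObj X)⟩
  comp {X Y Z : M} f g :=
    Quot.lift₂ (compPre D)
      (by
        rintro p q₁ q₂ ⟨h, hh⟩
        apply Quot.sound
        refine ⟨D.tHom h (𝟙 p.1), ?_⟩
        dsimp only [compPre]
        rw [hh, D.tHom_aHom, D.aHom_id]
        simp only [Category.assoc, eqToHom_trans_assoc, eqToHom_refl, Category.id_comp]
        rw [← Category.assoc (D.aHom h (𝟙 (D.aObj p.1 X))), D.aHom_exch h p.2]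
        simp)
      (by
        rintro p₁ p₂ q ⟨h, hh⟩
        apply Quot.sound
        refine ⟨D.tHom (𝟙 q.1) h, ?_⟩
        dsimp only [compPre]
        rw [hh, D.tHom_aHom, D.aHom_left]
        simp)
      f g

instance instCategoryQuillenBracket : Category (QuillenBracket D) where
  id_comp {X Y : M} f := by
    induction f using Quot.ind with
    | _ p =>
      show compPre D ⟨D.unit, eqToHom (D.unit_aObj X)⟩ p = Quot.mk _ p
      apply Quot.sound
      refine ⟨eqToHom (D.tObj_unit p.1).symm, ?_⟩
      dsimp only [compPre]
      rw [D.aHom_eqToHom, D.aHom_id_eqToHom]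
      simp
  comp_id {X Y : M} f := by
    induction f using Quot.ind with
    | _ p =>
      show compPre D p ⟨D.unit, eqToHom (D.unit_aObj Y)⟩ = Quot.mk _ p
      apply Quot.sound
      refine ⟨eqToHom (D.unit_tObj p.1).symm, ?_⟩
      dsimp only [compPre]
      rw [D.aHom_eqToHom, D.unit_aHom]
      simp
  assoc {X Y Z W : M} f g h := by
    induction f using Quot.ind with
    | _ p =>
    induction g using Quot.ind with
    | _ q =>
    induction h using Quot.ind with
    | _ s =>
      show compPre D ⟨D.tObj q.1 p.1,
          eqToHom (D.tObj_aObj q.1 p.1 X) ≫ D.aHom (𝟙 q.1) p.2 ≫ q.2⟩ s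
        = compPre D p ⟨D.tObj s.1 q.1,
          eqToHom (D.tObj_aObj s.1 q.1 Y) ≫ D.aHom (𝟙 s.1) q.2 ≫ s.2⟩
      apply Quot.sound
      refine ⟨eqToHom (D.tObj_assoc s.1 q.1 p.1), ?_⟩
      dsimp only [compPre]
      rw [D.aHom_eqToHom]
      have h1 : D.aHom (𝟙 (D.tObj s.1 q.1)) p.2
          = eqToHom (D.tObj_aObj s.1 q.1 (D.aObj p.1 X)) ≫
              D.aHom (𝟙 s.1) (D.aHom (𝟙 q.1) p.2) ≫ eqToHom (D.tObj_aObj s.1 q.1 Y).symm := by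
        rw [← D.tHom_id, D.tHom_aHom]
      rw [h1, D.aHom_left, D.aHom_left, D.aHom_id_eqToHom]
      simp

/-- The canonical morphism `[A, id_{A♮X}] : X ⟶ A ♮ X` of `⟨G, M⟩`. -/
def can (A : G) (X : M) : Hom' D X (D.aObj A X) :=
  Quot.mk _ ⟨A, 𝟙 (D.aObj A X)⟩

/-- The class `[A, φ]` of a pair as a morphism of `⟨G, M⟩`. -/
def homMk {X Y : M} (A : G) (φ : D.aObj A X ⟶ Y) : Hom' D X Y :=
  Quot.mk _ ⟨A, φ⟩

/-- The canonical faithful functor `M ↪ ⟨G, M⟩`, the identity on objects, sending `f` to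
`[0, f]`. -/
def incl : M ⥤ QuillenBracket D where
  obj X := X
  map {X Y} f := Quot.mk _ ⟨D.unit, eqToHom (D.unit_aObj X) ≫ f⟩
  map_id X := by
    erw [Category.comp_id]
    rfl
  map_comp {X Y Z} f g := by
    apply Quot.sound
    refine ⟨eqToHom (D.tObj_unit D.unit), ?_⟩
    dsimp only [compPre]
    rw [D.aHom_eqToHom, D.unit_aHom]
    simp

end QuillenBracket

open QuillenBracket

set_option linter.unusedVariables false

/-! ## Statement 1 (extension of natural transformations along the Quillen bracket
construction)

Let `(G, ♮, 0)` be a small strict braided monoidal groupoid with no zero divisors and with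
`Aut_G(0) = {id_0}`, acting strictly on the left on a small groupoid `M`; this data is
packaged in `D : StrictModuleData G M`.  `QuillenBracket D` is the Quillen bracket
construction `⟨G, M⟩` and `incl D : M ⥤ ⟨G,M⟩` the canonical faithful functor (the identity
on objects); `can D A X = [A, id_{A♮X}] : X ⟶ A ♮ X` denotes the canonical morphisms.

**Statement.**  Let `C` be a category, `F, G′ : ⟨G,M⟩ ⥤ C` two functors, and `η : F → G′` a
natural transformation between their restrictions along `M ↪ ⟨G,M⟩` (the data `η` of
components together with the hypothesis `hη` of naturality with respect to all morphisms of
`M`).  Then `η` is a natural transformation of functors on `⟨G,M⟩` if and only if for all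
objects `A` of `M` and `X` of `G` (so that `B = X ♮ A`), one has
`η_B ∘ F([X, id_B]) = G′([X, id_B]) ∘ η_A`. -/
theorem statement1
    {G : Type u} [Groupoid G] {M : Type u'} [Groupoid M] (D : StrictModuleData G M)
    (hNoZero : ∀ A B : G, Nonempty (D.tObj A B ≅ D.unit) →
      Nonempty (A ≅ D.unit) ∧ Nonempty (B ≅ D.unit))
    (hAutUnit : ∀ f : D.unit ⟶ D.unit, f = 𝟙 D.unit)
    {C : Type w} [Category.{w'} C] (F G' : QuillenBracket D ⥤ C)
    (η : ∀ X : M, F.obj X ⟶ G'.obj X)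
    (hη : ∀ {X Y : M} (f : X ⟶ Y),
      F.map ((incl D).map f) ≫ η Y = η X ≫ G'.map ((incl D).map f)) :
    (∀ (X Y : QuillenBracket D) (f : X ⟶ Y), F.map f ≫ η Y = η X ≫ G'.map f)
      ↔ (∀ (A : G) (X : M),
          F.map (can D A X) ≫ η (D.aObj A X) = η X ≫ G'.map (can D A X)) := by
  constructor
  · intro h A X
    exact h X (D.aObj A X) (can D A X)
  · intro h X Y f
    induction f using Quot.ind with
    | _ p =>
      obtain ⟨A, φ⟩ := p
      have key : (Quot.mk (QuillenBracket.rel D X Y) ⟨A, φ⟩ : X ⟶ Y)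
          = can D A X ≫ (incl D).map φ := by
        symm
        show compPre D ⟨A, 𝟙 (D.aObj A X)⟩
            ⟨D.unit, eqToHom (D.unit_aObj (D.aObj A X)) ≫ φ⟩ = _
        apply Quot.sound
        refine ⟨eqToHom (D.unit_tObj A).symm, ?_⟩
        dsimp only [compPre]
        erw [D.aHom_eqToHom, D.aHom_id]
        erw [Category.id_comp, eqToHom_trans_assoc, eqToHom_trans_assoc, eqToHom_refl, Category.id_comp]
      erw [key, F.map_comp, G'.map_comp,
        Category.assoc, hη φ, ← Category.assoc, h A X, Category.assoc]
      rfl
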